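/- Let n ≥ 1 and k ≥ 1 be odd integers and c any integer. Then in the ring R(n,k,c) one has the identity k · y^{n+k} + (n+1) · x^{n+k} + (y + c·x)^{n+k} = c^n · (C(n+k−1, n) − k) · x^n · y^k, where C denotes the binomial coefficient. -/

import Mathlib

/-!
In `R(n,k,c)` the relations read `x^{n+1} = 0` and `y^k (y + c x) = 0`, so `y^{k+j} = (-c x)^j y^k`.
Expanding `(y + c x)^{n+k}` binomially, the terms with `y^i`, `i < k`, carry `x^{n+1}` and vanish,
and the others all become multiples of `c^n x^n y^k`, with total coefficient the alternating tail
`∑_j (-1)^j C(n+k, k+j)`; by Pascal's rule this sum telescopes to `C(n+k-1, n)`.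
Since `n` is odd, `y^{n+k} = -c^n x^n y^k`, while `x^{n+k} = 0`.
-/

open MvPolynomial

noncomputable section

/-- The ideal `(X^{n+1}, Y^{k+1} + c·X·Y^k)` in `ℤ[X,Y]`. -/
def relIdeal (n k : ℕ) (c : ℤ) : Ideal (MvPolynomial (Fin 2) ℤ) :=
  Ideal.span {(X 0 : MvPolynomial (Fin 2) ℤ) ^ (n + 1),
    (X 1 : MvPolynomial (Fin 2) ℤ) ^ (k + 1) + C c * X 0 * (X 1 : MvPolynomial (Fin 2) ℤ) ^ k}

/-- The ring `R(n,k,c) = ℤ[X,Y]/(X^{n+1}, Y^{k+1} + c·X·Y^k)`. -/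
abbrev R (n k : ℕ) (c : ℤ) := MvPolynomial (Fin 2) ℤ ⧸ relIdeal n k c

/-- The image `x` of `X` in `R(n,k,c)`. -/
def x (n k : ℕ) (c : ℤ) : R n k c := Ideal.Quotient.mk (relIdeal n k c) (X 0)

/-- The image `y` of `Y` in `R(n,k,c)`. -/
def y (n k : ℕ) (c : ℤ) : R n k c := Ideal.Quotient.mk (relIdeal n k c) (X 1)

open Finset

theorem Int.alternating_sum_range_choose_succ_add (N k m : ℕ) :
    ∑ j ∈ Finset.range m, (-1) ^ j * ((N + 1).choose (k + 1 + j) : ℤ)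
      = N.choose k - (-1) ^ m * N.choose (k + m) := by
  induction m with
  | zero => simp
  | succ m ih =>
    rw [sum_range_succ, ih, show k + 1 + m = (k + m) + 1 by omega, Nat.choose_succ_succ,
      ← add_assoc]
    push_cast
    ring

theorem Int.alternating_sum_range_choose_add (n : ℕ) {k : ℕ} (hk : 0 < k) :
    ∑ j ∈ Finset.range (n + 1), (-1) ^ j * ((n + k).choose (k + j) : ℤ)
      = (n + k - 1).choose n := by
  obtain ⟨k, rfl⟩ : ∃ k', k = k' + 1 := ⟨k - 1, by omega⟩
  rw [← add_assoc, Nat.add_sub_cancel, Int.alternating_sum_range_choose_succ_add,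
    Nat.choose_eq_zero_of_lt (by omega : n + k < k + (n + 1)), Nat.choose_symm_add]
  simp

section
variable {A : Type*} [CommRing A] {a b c : A} {n k : ℕ}

theorem pow_add_eq_of_mul_add_eq_zero (hb : b ^ k * (b + c * a) = 0) (j : ℕ) :
    b ^ (k + j) = (-(c * a)) ^ j * b ^ k := by
  induction j with
  | zero => simp
  | succ j ih =>
    rw [← add_assoc, pow_succ, ih]
    linear_combination (-(c * a)) ^ j * hb

theorem pow_add_eq_neg_of_odd (hb : b ^ k * (b + c * a) = 0) (hn : Odd n) :
    b ^ (n + k) = -(c ^ n * (a ^ n * b ^ k)) := by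
  rw [add_comm n k, pow_add_eq_of_mul_add_eq_zero hb, hn.neg_pow, mul_pow, neg_mul, mul_assoc]

theorem add_mul_pow_add_eq (ha : a ^ (n + 1) = 0) (hb : b ^ k * (b + c * a) = 0) (hk : 0 < k) :
    (b + c * a) ^ (n + k) = c ^ n * (n + k - 1).choose n * (a ^ n * b ^ k) := by
  have hlow : ∀ i ∈ range k, b ^ i * (c * a) ^ (n + k - i) * (n + k).choose i = 0 := by
    intro i hi
    rw [show n + k - i = (n + 1) + (k - 1 - i) by grind, pow_add, mul_pow c a (n + 1), ha]
    ring
  have hhigh : ∀ j ∈ range (n + 1),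
      b ^ (k + j) * (c * a) ^ (n + k - (k + j)) * (n + k).choose (k + j)
        = (((-1) ^ j * (n + k).choose (k + j) : ℤ) : A) * c ^ n * (a ^ n * b ^ k) := by
    intro j hj
    have hjn : j ≤ n := Nat.lt_succ_iff.mp (mem_range.mp hj)
    have hcx : (c * a) ^ (n - j) * (c * a) ^ j = c ^ n * a ^ n := by
      rw [pow_sub_mul_pow _ hjn, mul_pow]
    rw [pow_add_eq_of_mul_add_eq_zero hb, show n + k - (k + j) = n - j by omega, neg_pow]
    push_cast
    linear_combination ((-1) ^ j * b ^ k * (n + k).choose (k + j)) * hcx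
  rw [add_pow, show n + k + 1 = k + (n + 1) by omega, sum_range_add, sum_eq_zero hlow,
    zero_add, sum_congr rfl hhigh, ← sum_mul, ← sum_mul, ← Int.cast_sum,
    Int.alternating_sum_range_choose_add n hk]
  push_cast
  ring
end

lemma x_pow_succ_eq_zero (n k : ℕ) (c : ℤ) : x n k c ^ (n + 1) = 0 := by
  rw [x, ← map_pow, Ideal.Quotient.eq_zero_iff_mem]
  exact Ideal.subset_span (Set.mem_insert _ _)

lemma y_pow_mul_add_eq_zero (n k : ℕ) (c : ℤ) :
    y n k c ^ k * (y n k c + (c : R n k c) * x n k c) = 0 := by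
  have h : Ideal.Quotient.mk (relIdeal n k c) ((X 1) ^ (k + 1) + C c * X 0 * (X 1) ^ k) = 0 :=
    Ideal.Quotient.eq_zero_iff_mem.mpr (Ideal.subset_span (Set.mem_insert_of_mem _ rfl))
  rw [eq_intCast MvPolynomial.C c] at h
  simp only [map_add, map_mul, map_pow, map_intCast] at h
  change y n k c ^ (k + 1) + c * x n k c * y n k c ^ k = 0 at h
  linear_combination h

theorem stmt6_general (n k : ℕ) (hk : 1 ≤ k) (hno : Odd n) (c : ℤ) :
    (k : ℤ) • y n k c ^ (n + k) + ((n : ℤ) + 1) • x n k c ^ (n + k)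
        + (y n k c + c • x n k c) ^ (n + k)
      = (c ^ n * (((n + k - 1).choose n : ℤ) - (k : ℤ))) • (x n k c ^ n * y n k c ^ k) := by
  have hx := x_pow_succ_eq_zero n k c
  have hy := y_pow_mul_add_eq_zero n k c
  have hx' : x n k c ^ (n + k) = 0 := pow_eq_zero_of_le (by omega) hx
  simp only [zsmul_eq_mul]
  rw [hx', pow_add_eq_neg_of_odd hy hno, add_mul_pow_add_eq hx hy hk]
  push_cast
  ring

/-- Let `n, k ≥ 1` be odd and `c` any integer. Then in `R(n,k,c)`:
`k·y^{n+k} + (n+1)·x^{n+k} + (y + c·x)^{n+k} = c^n·(C(n+k-1,n) - k)·x^n·y^k`. -/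
theorem stmt6 (n k : ℕ) (hn : 1 ≤ n) (hk : 1 ≤ k) (hno : Odd n) (hko : Odd k) (c : ℤ) :
    (k : ℤ) • y n k c ^ (n + k) + ((n : ℤ) + 1) • x n k c ^ (n + k)
        + (y n k c + c • x n k c) ^ (n + k)
      = (c ^ n * (((n + k - 1).choose n : ℤ) - (k : ℤ))) • (x n k c ^ n * y n k c ^ k) :=
  stmt6_general n k hk hno c

end
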